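/- Let f ∈ ℂ[x₁,…,x_n] with f(0)=0 be convenient and non-degenerate at 0. Then the origin is either a smooth point or an isolated singular point of the hypersurface V = f^{-1}(0). -/

import Mathlib

/-!
STATEMENT 18: If `f ∈ ℂ[x₁,…,xₙ]` with `f(0) = 0` is convenient and non-degenerate at
`0`, then the origin is a smooth point or an isolated singular point of
`V = f⁻¹(0)`; i.e. in a small ball around `0`, no point of `V` other than `0` is a
critical point of `f` lying on `V`.
-/

open scoped Classical

noncomputable section

/-- The Newton polyhedron `Γ₊(f)` of `f` at the origin: the convex hull of
`⋃_{α ∈ supp f} (α + ℝⁿ_{≥0})`. -/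
def NewtonPolyhedron {n : ℕ} (f : MvPolynomial (Fin n) ℂ) : Set (Fin n → ℝ) :=
  convexHull ℝ (⋃ α ∈ (f.support : Set (Fin n →₀ ℕ)), {x | ∀ i, (α i : ℝ) ≤ x i})

/-- `F` is a (nonempty) face of the convex set `P`. -/
def IsFaceOf {n : ℕ} (P F : Set (Fin n → ℝ)) : Prop :=
  IsExtreme ℝ P F ∧ Convex ℝ F ∧ F.Nonempty

/-- The truncation `f_F` of `f` to the monomials whose exponents lie in `F`. -/
def facePoly {n : ℕ} (f : MvPolynomial (Fin n) ℂ) (F : Set (Fin n → ℝ)) :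
    MvPolynomial (Fin n) ℂ :=
  ∑ α ∈ f.support, if (fun i => (α i : ℝ)) ∈ F
    then MvPolynomial.monomial α (MvPolynomial.coeff α f) else 0

/-- `f` is non-degenerate at `0`: for every compact face `F` of `Γ₊(f)`, the
hypersurface `{f_F = 0}` is smooth and reduced in the torus `(ℂ*)ⁿ`, i.e. `f_F` has
no critical point on it with all coordinates nonzero. -/
def NondegenerateAtZero {n : ℕ} (f : MvPolynomial (Fin n) ℂ) : Prop :=
  ∀ F : Set (Fin n → ℝ), IsFaceOf (NewtonPolyhedron f) F → IsCompact F →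
    ∀ x : Fin n → ℂ, (∀ i, x i ≠ 0) → MvPolynomial.eval x (facePoly f F) = 0 →
      ∃ i, MvPolynomial.eval x (MvPolynomial.pderiv i (facePoly f F)) ≠ 0

/-- `f` is convenient: `Γ₊(f)` meets the positive part of every coordinate axis. -/
def Convenient {n : ℕ} (f : MvPolynomial (Fin n) ℂ) : Prop :=
  ∀ i : Fin n, ∃ α ∈ f.support, 0 < α i ∧ ∀ j, j ≠ i → α j = 0


/-
Suppose that critical points `x k ≠ 0` of `f` on `V` tend to `0`. Along an ultrafilter the set `A`
of vanishing coordinates of `x k` is constant, and the other coordinates are written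
`x k i = exp (-w k i) * φ k i` with `‖φ k i‖ = 1` and `w k i → ∞`; on `A` the weight is chosen to
grow faster than everything else. Among the monomials not involving `A` (there is one by
convenience), those whose size `exp (-(w k ⬝ᵥ α))` stays comparable to the largest one form a set
`S`, and their relative sizes and the phases converge. Correcting `w k` by a bounded amount yields
a positive weight `p` for which `S` is exactly the set of support exponents minimizing `p ⬝ᵥ α`,
so the convex hull of `S` is a compact face `F` of `Γ₊(f)`; the limiting relative sizes and phases
are those of the monomials at a point `u` of the torus. Dividing `f (x k) = 0` and
`x k j * ∂ⱼ f (x k) = 0` by the largest monomial and passing to the limit gives `f_F u = 0` and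
`u j * ∂ⱼ f_F u = 0`, contradicting non-degeneracy.
-/

open Filter Topology MvPolynomial

section Convexity

variable {E : Type*} [AddCommGroup E] [Module ℝ E] (l : E →ₗ[ℝ] ℝ) {d : ℝ}

lemma eq_and_eq_of_mem_openSegment {x y z : E} (hz : z ∈ openSegment ℝ x y)
    (hx : d ≤ l x) (hy : d ≤ l y) (hzd : l z = d) : l x = d ∧ l y = d := by
  obtain ⟨a, b, ha, hb, hab, rfl⟩ := hz
  simp only [map_add, map_smul, smul_eq_mul] at hzd
  have hsum : a * (l x - d) + b * (l y - d) = 0 := by linear_combination hzd - d * hab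
  have hax := mul_nonneg ha.le (sub_nonneg.2 hx)
  have hby := mul_nonneg hb.le (sub_nonneg.2 hy)
  constructor
  · linarith [(mul_eq_zero.1 (by linarith : a * (l x - d) = 0)).resolve_left ha.ne']
  · linarith [(mul_eq_zero.1 (by linarith : b * (l y - d) = 0)).resolve_left hb.ne']

lemma convex_setOf_le_and_eq_imp {C : Set E} (hC : Convex ℝ C) :
    Convex ℝ {x | d ≤ l x ∧ (l x = d → x ∈ C)} := by
  refine convex_iff_openSegment_subset.2 fun x hx y hy z hz => ⟨?_, fun hzd => ?_⟩
  · obtain ⟨a, b, ha, hb, hab, rfl⟩ := hz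
    simp only [map_add, map_smul, smul_eq_mul]
    have hsum : a * l x + b * l y - d = a * (l x - d) + b * (l y - d) := by
      linear_combination d * hab
    nlinarith [mul_nonneg ha.le (sub_nonneg.2 hx.1), mul_nonneg hb.le (sub_nonneg.2 hy.1)]
  · obtain ⟨hxd, hyd⟩ := eq_and_eq_of_mem_openSegment l hz hx.1 hy.1 hzd
    exact hC.openSegment_subset (hx.2 hxd) (hy.2 hyd) hz

lemma isExtreme_of_le_and_eq_imp {A B : Set E} (hBA : B ⊆ A) (hB : ∀ x ∈ B, l x = d)
    (hA : ∀ x ∈ A, d ≤ l x ∧ (l x = d → x ∈ B)) : IsExtreme ℝ A B := by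
  refine ⟨hBA, fun x hx y hy z hz hzs => ?_⟩
  obtain ⟨hxd, -⟩ := eq_and_eq_of_mem_openSegment l hzs (hA x hx).1 (hA y hy).1 (hB z hz)
  exact (hA x hx).2 hxd

end Convexity

def realExponent {σ : Type*} (α : σ →₀ ℕ) : σ → ℝ := fun i => α i

section NewtonPolyhedron

variable {n : ℕ} {f : MvPolynomial (Fin n) ℂ} {p : Fin n → ℝ} {S : Finset (Fin n →₀ ℕ)} {d : ℝ}

lemma realExponent_mem_newtonPolyhedron {α : Fin n →₀ ℕ} (hα : α ∈ f.support) :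
    realExponent α ∈ NewtonPolyhedron f :=
  subset_convexHull ℝ _ (Set.mem_biUnion (Finset.mem_coe.2 hα) fun _ => le_rfl)

lemma le_and_eq_imp_of_mem_newtonPolyhedron (hp : ∀ i, 0 < p i)
    (hS : ∀ α ∈ S, p ⬝ᵥ realExponent α = d)
    (hsupp : ∀ β ∈ f.support, β ∉ S → d < p ⬝ᵥ realExponent β) {y : Fin n → ℝ}
    (hy : y ∈ NewtonPolyhedron f) :
    d ≤ p ⬝ᵥ y ∧ (p ⬝ᵥ y = d → y ∈ convexHull ℝ (realExponent '' S)) := by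
  refine convexHull_min ?_ (convex_setOf_le_and_eq_imp (dotProductBilin ℝ ℝ p)
    (convex_convexHull ℝ _)) hy
  simp only [Set.iUnion_subset_iff]
  intro α hα z hz
  have hαd : d ≤ p ⬝ᵥ realExponent α := by
    by_cases hαS : α ∈ S
    · exact (hS α hαS).ge
    · exact (hsupp α hα hαS).le
  have hterm : ∀ i, 0 ≤ p i * (z i - realExponent α i) := fun i =>
    mul_nonneg (hp i).le (sub_nonneg.2 (hz i))
  have hsub : p ⬝ᵥ z - p ⬝ᵥ realExponent α = ∑ i, p i * (z i - realExponent α i) := by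
    simp only [dotProduct, mul_sub, Finset.sum_sub_distrib]
  have hαz : p ⬝ᵥ realExponent α ≤ p ⬝ᵥ z :=
    sub_nonneg.1 (hsub ▸ Finset.sum_nonneg fun i _ => hterm i)
  simp only [Set.mem_ofPred_eq, dotProductBilin_apply_apply]
  refine ⟨hαd.trans hαz, fun hzd => ?_⟩
  have hαS : α ∈ S := by
    by_contra h
    linarith [hsupp α hα h]
  have hzα : z = realExponent α := funext fun i => by
    have h0 := (Finset.sum_eq_zero_iff_of_nonneg fun i _ => hterm i).1 (by linarith) i
      (Finset.mem_univ i)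
    exact sub_eq_zero.1 ((mul_eq_zero.1 h0).resolve_left (hp i).ne')
  exact hzα ▸ subset_convexHull ℝ _ ⟨α, hαS, rfl⟩

lemma dotProduct_eq_of_mem_convexHull (hS : ∀ α ∈ S, p ⬝ᵥ realExponent α = d)
    {y : Fin n → ℝ} (hy : y ∈ convexHull ℝ (realExponent '' S)) : p ⬝ᵥ y = d := by
  refine convexHull_min ?_ (convex_hyperplane (dotProductBilin ℝ ℝ p).isLinear d) hy
  rintro _ ⟨α, hα, rfl⟩
  exact hS α hα

lemma isFaceOf_convexHull (hp : ∀ i, 0 < p i) (hS : ∀ α ∈ S, p ⬝ᵥ realExponent α = d)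
    (hsupp : ∀ β ∈ f.support, β ∉ S → d < p ⬝ᵥ realExponent β) (hSf : S ⊆ f.support)
    (hSne : S.Nonempty) : IsFaceOf (NewtonPolyhedron f) (convexHull ℝ (realExponent '' S)) := by
  refine ⟨isExtreme_of_le_and_eq_imp (dotProductBilin ℝ ℝ p) ?_
    (fun y hy => dotProduct_eq_of_mem_convexHull hS hy)
    (fun y hy => le_and_eq_imp_of_mem_newtonPolyhedron hp hS hsupp hy),
    convex_convexHull ℝ _, ((Finset.coe_nonempty.2 hSne).image _).mono (subset_convexHull ℝ _)⟩
  refine convexHull_min ?_ (convex_convexHull ℝ _)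
  rintro _ ⟨α, hα, rfl⟩
  exact realExponent_mem_newtonPolyhedron (hSf hα)

lemma filter_realExponent_mem_convexHull (hS : ∀ α ∈ S, p ⬝ᵥ realExponent α = d)
    (hsupp : ∀ β ∈ f.support, β ∉ S → d < p ⬝ᵥ realExponent β) (hSf : S ⊆ f.support) :
    f.support.filter (realExponent · ∈ convexHull ℝ (realExponent '' S)) = S := by
  ext α
  refine ⟨fun h => ?_, fun h => Finset.mem_filter.2 ⟨hSf h, subset_convexHull ℝ _ ⟨α, h, rfl⟩⟩⟩
  obtain ⟨hα, hαF⟩ := Finset.mem_filter.1 h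
  by_contra hαS
  exact (hsupp α hα hαS).ne' (dotProduct_eq_of_mem_convexHull hS hαF)

end NewtonPolyhedron

section Evaluation

variable {σ R : Type*} [Fintype σ] [CommRing R]

lemma eval_sum_monomial (s : Finset (σ →₀ ℕ)) (c : (σ →₀ ℕ) → R) (x : σ → R) :
    eval x (∑ α ∈ s, monomial α (c α)) = ∑ α ∈ s, c α * ∏ i, x i ^ α i := by
  simp only [map_sum, eval_monomial, Finsupp.prod_fintype _ _ fun i => pow_zero (x i)]

lemma mul_eval_pderiv_sum_monomial (s : Finset (σ →₀ ℕ)) (c : (σ →₀ ℕ) → R) (x : σ → R)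
    (j : σ) : x j * eval x (pderiv j (∑ α ∈ s, monomial α (c α))) =
      ∑ α ∈ s, (α j * c α) * ∏ i, x i ^ α i := by
  rw [← eval_X (f := x) j, ← map_mul, map_sum, Finset.mul_sum]
  simp only [X_mul_pderiv_monomial, nsmul_eq_mul, ← C_eq_coe_nat, C_mul_monomial]
  exact eval_sum_monomial s _ x

lemma mul_eval_pderiv (f : MvPolynomial σ R) (x : σ → R) (j : σ) :
    x j * eval x (pderiv j f) = ∑ α ∈ f.support, (α j * coeff α f) * ∏ i, x i ^ α i := by
  conv_lhs => rw [f.as_sum]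
  exact mul_eval_pderiv_sum_monomial _ _ x j

lemma sum_filter_mul_prod_pow_eq {x : σ → R} {A : Finset σ} (hA : ∀ i ∈ A, x i = 0)
    (s : Finset (σ →₀ ℕ)) (c : (σ →₀ ℕ) → R) [DecidablePred fun α : σ →₀ ℕ => ∀ i ∈ A, α i = 0] :
    ∑ α ∈ s with ∀ i ∈ A, α i = 0, c α * ∏ i, x i ^ α i = ∑ α ∈ s, c α * ∏ i, x i ^ α i :=
  Finset.sum_filter_of_ne fun α _ hα i hi => by
    by_contra h
    exact hα (by rw [Finset.prod_eq_zero (Finset.mem_univ i) (by rw [hA i hi, zero_pow h]),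
      mul_zero])

end Evaluation

lemma facePoly_eq_sum {n : ℕ} (f : MvPolynomial (Fin n) ℂ) (F : Set (Fin n → ℝ)) :
    facePoly f F = ∑ α ∈ f.support with realExponent α ∈ F, monomial α (coeff α f) :=
  (Finset.sum_filter _ _).symm

section Polar

variable {σ : Type*} [Fintype σ]

lemma prod_ofReal_exp_mul_pow (r : σ → ℝ) (φ : σ → ℂ) (α : σ →₀ ℕ) :
    ∏ i, ((Real.exp (r i) : ℂ) * φ i) ^ α i =
      Real.exp (r ⬝ᵥ realExponent α) * ∏ i, φ i ^ α i := by
  simp only [mul_pow, Finset.prod_mul_distrib, dotProduct, realExponent, Real.exp_sum,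
    mul_comm (r _), Real.exp_nat_mul]
  push_cast
  rfl

lemma prod_pow_eq_exp_mul (x : σ → ℂ) (α : σ →₀ ℕ) (hx : ∀ i, α i ≠ 0 → x i ≠ 0) :
    ∏ i, x i ^ α i = Real.exp ((fun i => Real.log ‖x i‖) ⬝ᵥ realExponent α) *
      ∏ i, Complex.exp (Complex.arg (x i) * Complex.I) ^ α i := by
  rw [← prod_ofReal_exp_mul_pow]
  refine Finset.prod_congr rfl fun i _ => ?_
  by_cases h : α i = 0
  · simp [h]
  · rw [Real.exp_log (norm_pos_iff.2 (hx i h)), Complex.norm_mul_exp_arg_mul_I]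

lemma sum_mul_prod_exp_mul_pow {S : Finset (σ →₀ ℕ)} {α₀ : σ →₀ ℕ} {g : σ → ℝ}
    {ℓ : (σ →₀ ℕ) → ℝ} (hg : ∀ α ∈ S, g ⬝ᵥ (realExponent α - realExponent α₀) = ℓ α)
    (Φ : σ → ℂ) (c : (σ →₀ ℕ) → ℂ) :
    ∑ α ∈ S, c α * ∏ i, ((Real.exp (-g i) : ℂ) * Φ i) ^ α i =
      Real.exp (-(g ⬝ᵥ realExponent α₀)) * ∑ α ∈ S, c α * (Real.exp (-ℓ α) * ∏ i, Φ i ^ α i) := by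
  rw [Finset.mul_sum]
  refine Finset.sum_congr rfl fun α hα => ?_
  have hgα : (fun i => -g i) ⬝ᵥ realExponent α = -(g ⬝ᵥ realExponent α₀) + -ℓ α := by
    rw [show (fun i => -g i) = -g from rfl, neg_dotProduct, ← hg α hα, dotProduct_sub]
    ring
  rw [prod_ofReal_exp_mul_pow, hgα, Real.exp_add, Complex.ofReal_mul]
  ring

end Polar

theorem exists_pos_dotProduct_of_tendsto {β ι κ : Type*} [Fintype κ] {l : Filter β} [l.NeBot]
    {w : β → κ → ℝ} {S B : Finset ι} {v : ι → κ → ℝ} {ℓ : ι → ℝ}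
    (hw : ∀ i, Tendsto (fun k => w k i) l atTop)
    (hS : ∀ a ∈ S, Tendsto (fun k => w k ⬝ᵥ v a) l (𝓝 (ℓ a)))
    (hB : ∀ b ∈ B, Tendsto (fun k => w k ⬝ᵥ v b) l atTop) :
    ∃ p g : κ → ℝ, (∀ i, 0 < p i) ∧ (∀ a ∈ S, p ⬝ᵥ v a = 0) ∧ (∀ b ∈ B, 0 < p ⬝ᵥ v b) ∧
      ∀ a ∈ S, g ⬝ᵥ v a = ℓ a := by
  set L := Matrix.mulVecLin (Matrix.of fun a : S => v a)
  have hL : ∀ z a, L z a = z ⬝ᵥ v a := fun z a => dotProduct_comm _ _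
  have hLw : Tendsto (fun k => L (w k)) l (𝓝 fun a => ℓ a) :=
    tendsto_pi_nhds.2 fun a => by simpa only [hL] using hS a a.2
  have hℓ : (fun a : S => ℓ a) ∈ LinearMap.range L :=
    (LinearMap.range L).closed_of_finiteDimensional.mem_of_tendsto hLw
      (Eventually.of_forall fun k => LinearMap.mem_range_self L (w k))
  -- a (continuous) right inverse `s` of `L` moves `w k` into `ker L` by a bounded correction
  obtain ⟨s, hs⟩ := L.rangeRestrict.exists_rightInverse_of_surjective L.range_rangeRestrict
  have hLs : ∀ y, L (s y) = y := fun y => congrArg Subtype.val (LinearMap.congr_fun hs y)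
  set g := s ⟨_, hℓ⟩
  have hsw : Tendsto (fun k => s (L.rangeRestrict (w k))) l (𝓝 g) :=
    (s.continuous_of_finiteDimensional.tendsto _).comp (tendsto_subtype_rng.2 hLw)
  have hker : ∀ k, ∀ a ∈ S, (w k - s (L.rangeRestrict (w k))) ⬝ᵥ v a = 0 := by
    intro k a ha
    rw [← hL _ ⟨a, ha⟩, map_sub, hLs]
    simp
  have hpos : ∀ᶠ k in l, ∀ i, 0 < (w k - s (L.rangeRestrict (w k))) i :=
    eventually_all.2 fun i =>
      ((hw i).atTop_add ((tendsto_pi_nhds.1 hsw i).neg)).eventually_gt_atTop 0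
  have hposB : ∀ᶠ k in l, ∀ b ∈ B, 0 < (w k - s (L.rangeRestrict (w k))) ⬝ᵥ v b := by
    refine (Finset.eventually_all B).2 fun b hb => ?_
    have hg : Tendsto (fun k => s (L.rangeRestrict (w k)) ⬝ᵥ v b) l (𝓝 (g ⬝ᵥ v b)) :=
      ((continuous_id.dotProduct continuous_const).tendsto g).comp hsw
    simp only [sub_dotProduct]
    exact ((hB b hb).atTop_add hg.neg).eventually_gt_atTop 0
  obtain ⟨k, hk, hkB⟩ := (hpos.and hposB).exists
  refine ⟨_, g, hk, hker k, hkB, fun a ha => ?_⟩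
  rw [← hL _ ⟨a, ha⟩, hLs]

lemma IsCompact.exists_tendsto_of_ultrafilter {β X : Type*} [TopologicalSpace X] {s : Set X}
    (hs : IsCompact s) (ℱ : Ultrafilter β) {z : β → X} (hz : ∀ᶠ k in ℱ, z k ∈ s) :
    ∃ a ∈ s, Tendsto z ℱ (𝓝 a) :=
  hs.ultrafilter_le_nhds (ℱ.map z) (le_principal_iff.2 hz)

section Tropical

variable {β σ : Type*} [Fintype σ]

lemma exists_min_tendsto_exp (ℱ : Ultrafilter β) {T : Finset (σ →₀ ℕ)} (hT : T.Nonempty)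
    (w : β → σ → ℝ) : ∃ α₀ ∈ T, ∃ Λ : (σ →₀ ℕ) → ℝ, ∀ α ∈ T, 0 ≤ Λ α ∧
      Tendsto (fun k => Real.exp (-(w k ⬝ᵥ (realExponent α - realExponent α₀)))) ℱ (𝓝 (Λ α)) := by
  obtain ⟨α₀, hα₀, hmin⟩ : ∃ α₀ ∈ T, ∀ᶠ k in ℱ, ∀ α ∈ T,
      w k ⬝ᵥ realExponent α₀ ≤ w k ⬝ᵥ realExponent α :=
    (Ultrafilter.eventually_exists_mem_iff T.finite_toSet).1
      (Eventually.of_forall fun k => T.exists_min_image _ hT)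
  have hlim : ∀ α ∈ T, ∃ Λ ∈ Set.Icc (0 : ℝ) 1,
      Tendsto (fun k => Real.exp (-(w k ⬝ᵥ (realExponent α - realExponent α₀)))) ℱ (𝓝 Λ) :=
    fun α hα => isCompact_Icc.exists_tendsto_of_ultrafilter ℱ <| hmin.mono fun k hk =>
      ⟨(Real.exp_pos _).le, Real.exp_le_one_iff.2 <| by
        rw [dotProduct_sub]
        linarith [hk α hα]⟩
  choose! Λ hΛ using hlim
  exact ⟨α₀, hα₀, Λ, fun α hα => ⟨(hΛ α hα).1.1, (hΛ α hα).2⟩⟩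

theorem exists_tropical_limit (ℱ : Ultrafilter β) {T : Finset (σ →₀ ℕ)} (hT : T.Nonempty)
    (w : β → σ → ℝ) {φ : β → σ → ℂ} (hφ : ∀ k i, ‖φ k i‖ = 1) :
    ∃ S ⊆ T, ∃ α₀ ∈ S, ∃ (ℓ : (σ →₀ ℕ) → ℝ) (Φ : σ → ℂ), (∀ i, Φ i ≠ 0) ∧
      (∀ a ∈ S, Tendsto (fun k => w k ⬝ᵥ (realExponent a - realExponent α₀)) ℱ (𝓝 (ℓ a))) ∧
      (∀ b ∈ T, b ∉ S → Tendsto (fun k => w k ⬝ᵥ (realExponent b - realExponent α₀)) ℱ atTop) ∧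
      ∀ c : (σ →₀ ℕ) → ℂ, (∀ᶠ k in ℱ,
        ∑ α ∈ T, c α * (Real.exp (-(w k ⬝ᵥ realExponent α)) * ∏ i, φ k i ^ α i) = 0) →
        ∑ α ∈ S, c α * (Real.exp (-ℓ α) * ∏ i, Φ i ^ α i) = 0 := by
  obtain ⟨α₀, hα₀, Λ, hΛ⟩ := exists_min_tendsto_exp ℱ hT w
  obtain ⟨Φ, hΦ, hφΦ⟩ := IsCompact.exists_tendsto_of_ultrafilter
    (isCompact_univ_pi fun _ => isCompact_sphere (0 : ℂ) 1) ℱ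
    (Eventually.of_forall fun k => by simpa using hφ k)
  have hΛα₀ : Λ α₀ = 1 := tendsto_nhds_unique (hΛ α₀ hα₀).2 (by simp)
  set S := T.filter (Λ · ≠ 0)
  have hST : S ⊆ T := Finset.filter_subset _ _
  have hΛS : ∀ a ∈ S, 0 < Λ a := fun a ha =>
    (hΛ a (Finset.mem_filter.1 ha).1).1.lt_of_ne' (Finset.mem_filter.1 ha).2
  refine ⟨S, hST, α₀, Finset.mem_filter.2 ⟨hα₀, by simp [hΛα₀]⟩, fun α => -Real.log (Λ α), Φ,
    fun i h => by simpa [h] using hΦ i (Set.mem_univ i), fun a ha => ?_, fun b hbT hbS => ?_,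
    fun c hc => ?_⟩
  · have := ((Real.continuousAt_log (hΛS a ha).ne').tendsto.comp (hΛ a (hST ha)).2).neg
    simpa [Function.comp_def] using this
  · have hΛb : Λ b = 0 := by simpa [S, hbT] using hbS
    have := (hΛ b hbT).2
    rwa [hΛb, Real.tendsto_exp_comp_nhds_zero, tendsto_neg_atBot_iff] at this
  · set m : β → (σ →₀ ℕ) → ℂ := fun k α =>
      Real.exp (-(w k ⬝ᵥ (realExponent α - realExponent α₀))) * ∏ i, φ k i ^ α i
    have hm : ∀ α ∈ T, Tendsto (fun k => c α * m k α) ℱ (𝓝 (c α * (Λ α * ∏ i, Φ i ^ α i))) :=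
      fun α hα => (((Complex.continuous_ofReal.tendsto _).comp (hΛ α hα).2).mul <|
        tendsto_finsetProd _ fun i _ => (tendsto_pi_nhds.1 hφΦ i).pow _).const_mul (c α)
    have hm0 : ∀ᶠ k in ℱ, ∑ α ∈ T, c α * m k α = 0 := hc.mono fun k hk => by
      rw [← mul_zero (Real.exp (w k ⬝ᵥ realExponent α₀) : ℂ), ← hk, Finset.mul_sum]
      refine Finset.sum_congr rfl fun α _ => ?_
      simp only [m]
      rw [dotProduct_sub, neg_sub, sub_eq_add_neg, Real.exp_add, Complex.ofReal_mul]
      ring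
    have hlim := tendsto_nhds_unique (tendsto_finsetSum _ hm)
      (tendsto_const_nhds.congr' (hm0.mono fun k hk => hk.symm))
    rw [← hlim, ← Finset.sum_filter_of_ne (s := T) (p := fun α => Λ α ≠ 0)
      fun α _ hα h => by simp [h] at hα]
    exact Finset.sum_congr rfl fun α hα => by rw [neg_neg, Real.exp_log (hΛS α hα)]

end Tropical

section Valuation

variable {σ : Type*} [Fintype σ]

lemma tendsto_neg_log_norm_atTop {l : Filter ℕ} {z : ℕ → ℂ} (hz : Tendsto z l (𝓝 0))
    (hz0 : ∀ᶠ k in l, z k ≠ 0) : Tendsto (fun k => -Real.log ‖z k‖) l atTop :=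
  tendsto_neg_atBot_atTop.comp <| Real.tendsto_log_nhdsGT_zero.comp <|
    tendsto_nhdsWithin_iff.2 ⟨by simpa using hz.norm, hz0.mono fun k hk => norm_pos_iff.2 hk⟩

theorem exists_valuation_of_tendsto_zero {l : Filter ℕ} (hl : l ≤ atTop) {x : ℕ → σ → ℂ}
    (hx : Tendsto x l (𝓝 0)) {A : Finset σ} (hA : ∀ᶠ k in l, ∀ i, x k i = 0 ↔ i ∈ A)
    (T : Finset (σ →₀ ℕ)) (hT : ∀ α ∈ T, ∀ i ∈ A, α i = 0) :
    ∃ (w : ℕ → σ → ℝ) (φ : ℕ → σ → ℂ), (∀ k i, ‖φ k i‖ = 1) ∧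
      (∀ i, Tendsto (fun k => w k i) l atTop) ∧
      (∀ α ∈ T, ∀ᶠ k in l,
        ∏ i, x k i ^ α i = Real.exp (-(w k ⬝ᵥ realExponent α)) * ∏ i, φ k i ^ α i) ∧
      ∀ α ∈ T, ∀ β : σ →₀ ℕ, (∃ i ∈ A, β i ≠ 0) →
        Tendsto (fun k => w k ⬝ᵥ (realExponent β - realExponent α)) l atTop := by
  set L : ℕ → σ → ℝ := fun k i => Real.log ‖x k i‖
  set χ : σ → ℝ := fun i => if i ∈ A then 1 else 0
  -- the weight on `A` (where `x k` vanishes) must dominate every `L k ⬝ᵥ α` with `α ∈ T`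
  set τ : ℕ → ℝ := fun k => k + ∑ α ∈ T, |L k ⬝ᵥ realExponent α|
  have hχT : ∀ α ∈ T, χ ⬝ᵥ realExponent α = 0 := fun α hα =>
    Finset.sum_eq_zero fun i _ => by by_cases hi : i ∈ A <;> simp [χ, hi, hT α hα i, realExponent]
  have hL : ∀ᶠ k in l, ∀ i, L k i ≤ 0 :=
    (hx.eventually (Metric.ball_mem_nhds 0 one_pos)).mono fun k hk i =>
      Real.log_nonpos (norm_nonneg _) ((norm_le_pi_norm (x k) i).trans (by simpa using hk.le))
  have hτ : ∀ k : ℕ, (k : ℝ) ≤ τ k := fun k =>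
    le_add_of_nonneg_right (Finset.sum_nonneg fun _ _ => abs_nonneg _)
  have hk : Tendsto (fun k : ℕ => (k : ℝ)) l atTop := tendsto_natCast_atTop_atTop.mono_left hl
  refine ⟨fun k => τ k • χ - L k, fun k i => Complex.exp (Complex.arg (x k i) * Complex.I),
    fun k i => Complex.norm_exp_ofReal_mul_I _, fun i => ?_, fun α hα => ?_,
    fun α hα β ⟨i₁, hi₁, hβ⟩ => tendsto_atTop_mono' l ?_ hk⟩
  · by_cases hi : i ∈ A
    · refine tendsto_atTop_mono' l ?_ hk
      filter_upwards [hA] with k hk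
      simpa [χ, hi, L, (hk i).2 hi] using hτ k
    · refine (tendsto_neg_log_norm_atTop ((tendsto_pi_nhds.1 hx) i)
        (hA.mono fun k hk h => hi ((hk i).1 h))).congr fun k => ?_
      simp [χ, hi, L]
  · filter_upwards [hA] with k hk
    rw [prod_pow_eq_exp_mul (x k) α fun i hαi hxi => hαi (hT α hα i ((hk i).1 hxi))]
    simp [sub_dotProduct, smul_dotProduct, hχT α hα, L]
  · filter_upwards [hL] with k hk
    have hχβ : 1 ≤ χ ⬝ᵥ realExponent β :=
      calc (1 : ℝ) ≤ χ i₁ * realExponent β i₁ := by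
            simpa [χ, hi₁, realExponent, Nat.one_le_iff_ne_zero] using hβ
        _ ≤ χ ⬝ᵥ realExponent β := Finset.single_le_sum (fun i _ => mul_nonneg
            (by simp only [χ]; split_ifs <;> norm_num) (Nat.cast_nonneg _)) (Finset.mem_univ i₁)
    have hLβ : L k ⬝ᵥ realExponent β ≤ 0 :=
      Finset.sum_nonpos fun i _ => mul_nonpos_of_nonpos_of_nonneg (hk i) (Nat.cast_nonneg _)
    have hLα : -(L k ⬝ᵥ realExponent α) ≤ τ k - k := by
      simp only [τ, add_sub_cancel_left]
      exact (neg_le_abs _).trans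
        (Finset.single_le_sum (f := fun α => |L k ⬝ᵥ realExponent α|) (fun _ _ => abs_nonneg _) hα)
    have hτ0 : 0 ≤ τ k := (Nat.cast_nonneg k).trans (hτ k)
    calc (k : ℝ) ≤ τ k * (χ ⬝ᵥ realExponent β) - L k ⬝ᵥ realExponent β + L k ⬝ᵥ realExponent α := by
          nlinarith
      _ = (τ k • χ - L k) ⬝ᵥ (realExponent β - realExponent α) := by
          simp only [dotProduct_sub, sub_dotProduct, smul_dotProduct, hχT α hα, smul_eq_mul]
          ring

end Valuation

lemma Ultrafilter.exists_eventually_eq_zero_iff {β σ M : Type*} [Fintype σ] [Zero M]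
    (ℱ : Ultrafilter β) (x : β → σ → M) : ∃ A : Finset σ, ∀ᶠ k in ℱ, ∀ i, x k i = 0 ↔ i ∈ A :=
  Ultrafilter.eventually_exists_iff.1
    (Eventually.of_forall fun k => ⟨Finset.univ.filter (x k · = 0), by simp⟩)

lemma Convenient.exists_mem_support_forall_eq_zero {n : ℕ} {f : MvPolynomial (Fin n) ℂ}
    (hconv : Convenient f) {A : Finset (Fin n)} {j : Fin n} (hj : j ∉ A) :
    ∃ α ∈ f.support, ∀ i ∈ A, α i = 0 := by
  obtain ⟨α, hα, -, hαj⟩ := hconv j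
  exact ⟨α, hα, fun i hi => hαj i (by rintro rfl; exact hj hi)⟩

theorem Convenient.exists_compact_face_of_tendsto_zero {n : ℕ} {f : MvPolynomial (Fin n) ℂ}
    (hconv : Convenient f) {x : ℕ → Fin n → ℂ} (hx : Tendsto x atTop (𝓝 0))
    (hx0 : ∀ k, x k ≠ 0) :
    ∃ F, IsFaceOf (NewtonPolyhedron f) F ∧ IsCompact F ∧ ∃ u : Fin n → ℂ, (∀ i, u i ≠ 0) ∧
      ∀ c : (Fin n →₀ ℕ) → ℂ, (∀ᶠ k in atTop, ∑ α ∈ f.support, c α * ∏ i, x k i ^ α i = 0) →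
        ∑ α ∈ f.support with realExponent α ∈ F, c α * ∏ i, u i ^ α i = 0 := by
  set ℱ := Ultrafilter.of (atTop : Filter ℕ)
  have hℱ : (ℱ : Filter ℕ) ≤ atTop := Ultrafilter.of_le _
  obtain ⟨A, hA⟩ := ℱ.exists_eventually_eq_zero_iff x
  obtain ⟨j₀, hj₀⟩ : ∃ j, j ∉ A := by
    obtain ⟨k, hk⟩ := hA.exists
    obtain ⟨j, hj⟩ := Function.ne_iff.1 (hx0 k)
    exact ⟨j, fun h => hj ((hk j).2 h)⟩
  set T := f.support.filter fun α => ∀ i ∈ A, α i = 0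
  have hT : T.Nonempty := by
    obtain ⟨α, hα, hαA⟩ := hconv.exists_mem_support_forall_eq_zero hj₀
    exact ⟨α, Finset.mem_filter.2 ⟨hα, hαA⟩⟩
  obtain ⟨w, φ, hφ, hw, hxw, hwA⟩ := exists_valuation_of_tendsto_zero hℱ (hx.mono_left hℱ) hA T
    fun α hα => (Finset.mem_filter.1 hα).2
  obtain ⟨S, hST, α₀, hα₀, ℓ, Φ, hΦ, hℓS, hℓT, hlim⟩ := exists_tropical_limit ℱ hT w hφ
  have hB : ∀ b ∈ f.support \ S,
      Tendsto (fun k => w k ⬝ᵥ (realExponent b - realExponent α₀)) ℱ atTop := by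
    intro b hb
    obtain ⟨hbf, hbS⟩ := Finset.mem_sdiff.1 hb
    by_cases hbT : b ∈ T
    · exact hℓT b hbT hbS
    · exact hwA α₀ (hST hα₀) b (by simpa [T, hbf] using hbT)
  obtain ⟨p, g, hp, hpS, hpB, hg⟩ := exists_pos_dotProduct_of_tendsto hw hℓS hB
  have hpS' : ∀ α ∈ S, p ⬝ᵥ realExponent α = p ⬝ᵥ realExponent α₀ := fun α hα =>
    sub_eq_zero.1 (by rw [← dotProduct_sub]; exact hpS α hα)
  have hpB' : ∀ β ∈ f.support, β ∉ S → p ⬝ᵥ realExponent α₀ < p ⬝ᵥ realExponent β :=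
    fun β hβ hβS => sub_pos.1 (by rw [← dotProduct_sub]; exact hpB β (Finset.mem_sdiff.2 ⟨hβ, hβS⟩))
  have hSf : S ⊆ f.support := hST.trans (Finset.filter_subset _ _)
  refine ⟨_, isFaceOf_convexHull hp hpS' hpB' hSf ⟨α₀, hα₀⟩,
    (S.finite_toSet.image _).isCompact_convexHull ℝ, fun i => Real.exp (-g i) * Φ i,
    fun i => mul_ne_zero (by simp) (hΦ i), fun c hc => ?_⟩
  have hT0 : ∀ᶠ k in ℱ,
      ∑ α ∈ T, c α * (Real.exp (-(w k ⬝ᵥ realExponent α)) * ∏ i, φ k i ^ α i) = 0 := by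
    filter_upwards [hc.filter_mono hℱ, hA, (eventually_all_finset T).2 hxw] with k hck hAk hxk
    rw [← Finset.sum_congr rfl fun α hα => congrArg (c α * ·) (hxk α hα), ← hck]
    exact sum_filter_mul_prod_pow_eq (fun i hi => (hAk i).2 hi) _ _
  rw [filter_realExponent_mem_convexHull hpS' hpB' hSf, sum_mul_prod_exp_mul_pow hg,
    hlim c hT0, mul_zero]

theorem convenient_nondegenerate_isolated_singularity_general
    (n : ℕ) (f : MvPolynomial (Fin n) ℂ)
    (hconv : Convenient f)
    (hnd : NondegenerateAtZero f) :
    ∃ ε : ℝ, 0 < ε ∧ ∀ x : Fin n → ℂ, ‖x‖ < ε → x ≠ 0 →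
      ¬ (MvPolynomial.eval x f = 0 ∧
          ∀ i, MvPolynomial.eval x (MvPolynomial.pderiv i f) = 0) := by
  by_contra! h
  choose x hx_small hx0 hx_crit using fun k : ℕ => h (1 / (k + 1)) Nat.one_div_pos_of_nat
  have hx : Tendsto x atTop (𝓝 0) := squeeze_zero_norm (fun k => (hx_small k).le)
    tendsto_one_div_add_atTop_nhds_zero_nat
  obtain ⟨F, hF, hFc, u, hu, hlim⟩ := hconv.exists_compact_face_of_tendsto_zero hx hx0
  have hu_zero : eval u (facePoly f F) = 0 := by
    rw [facePoly_eq_sum, eval_sum_monomial]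
    exact hlim _ (Eventually.of_forall fun k => by rw [← eval_eq', (hx_crit k).1])
  obtain ⟨j, hj⟩ := hnd F hF hFc u hu hu_zero
  refine hj ((mul_eq_zero.1 ?_).resolve_left (hu j))
  rw [facePoly_eq_sum, mul_eval_pderiv_sum_monomial]
  exact hlim _ (Eventually.of_forall fun k => by rw [← mul_eval_pderiv, (hx_crit k).2 j, mul_zero])

theorem convenient_nondegenerate_isolated_singularity
    (n : ℕ) (f : MvPolynomial (Fin n) ℂ)
    (hf0 : MvPolynomial.coeff 0 f = 0)
    (hconv : Convenient f)
    (hnd : NondegenerateAtZero f) :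
    ∃ ε : ℝ, 0 < ε ∧ ∀ x : Fin n → ℂ, ‖x‖ < ε → x ≠ 0 →
      ¬ (MvPolynomial.eval x f = 0 ∧
          ∀ i, MvPolynomial.eval x (MvPolynomial.pderiv i f) = 0) :=
  convenient_nondegenerate_isolated_singularity_general n f hconv hnd

end
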